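/- arXiv:2003.13899 — 8 statements merged into one kernel-verified Lean document; each statement's English description precedes it below -/
import Mathlib

section
/- With the scattering-algebra setup of the context, the following two vector identities hold in ℂ²: e = ρ·c − κ·E·d and f = κ̂·E⁻¹·c + ρ̂·d. (These are the relations expressing the columns of the eigenfunction G₂ in terms of the columns of G₃ via the functions ρ and κ.) -/
/-! With `G₃ = G₁ S` and `G₂ = G₁ T`, where `S = [[yh, zE⁻¹], [-zhE, y]]` and
`T = [[Yh, ZE⁻¹], [-ZhE, Y]]`, the relation `det S = y yh + z zh = 1` gives
`S⁻¹ = [[y, -zE⁻¹], [zhE, yh]]`; hence `G₂ = G₃ (S⁻¹ T)` with `S⁻¹ T = [[ρ, κh E⁻¹], [-κE, ρh]]`. -/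

theorem eq_smul_sub_smul_of_det_eq_one {R M : Type*} [CommRing R] [AddCommGroup M] [Module R M]
    {a b c d : M} {p q r s : R} (hdet : p * s - q * r = 1)
    (hc : c = p • a + q • b) (hd : d = r • a + s • b) :
    a = s • c - q • d ∧ b = p • d - r • c := by
  subst hc hd
  constructor
  · linear_combination (norm := module) -hdet • a
  · linear_combination (norm := module) -hdet • b

theorem stmt_4_general (E : ℂ) (hE : E ≠ 0) (a b : Fin 2 → ℂ)
    (y yh z zh Y Yh Z Zh : ℂ)
    (hdet1 : y * yh + z * zh = 1)
    (c d e f : Fin 2 → ℂ)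
    (hc : c = yh • a - (zh * E) • b) (hd : d = (z * E⁻¹) • a + y • b)
    (he : e = Yh • a - (Zh * E) • b) (hf : f = (Z * E⁻¹) • a + Y • b)
    (ρ κ ρh κh : ℂ)
    (hρ : ρ = y * Yh + z * Zh) (hκ : κ = yh * Zh - zh * Yh)
    (hρh : ρh = yh * Y + zh * Z) (hκh : κh = y * Z - z * Y) :
    e = ρ • c - (κ * E) • d ∧ f = (κh * E⁻¹) • c + ρh • d := by
  have hEE : E * E⁻¹ = 1 := mul_inv_cancel₀ hE
  have hdetS : yh * y - (-(zh * E)) * (z * E⁻¹) = 1 := by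
    linear_combination hdet1 + zh * z * hEE
  obtain ⟨ha, hb⟩ := eq_smul_sub_smul_of_det_eq_one (c := c) hdetS (by rw [hc]; module) hd
  subst he hf hρ hκ hρh hκh
  rw [ha, hb]
  constructor
  · linear_combination (norm := module) (z * Zh) • hEE • c
  · linear_combination (norm := module) (zh * Z) • hEE • d

/-- scattering algebra of the Fokas method for the FODNLS equation.
With `c, d` the columns of `G₃`, `e, f` the columns of `G₂`, built from the columns
`a, b` of `G₁` via the spectral functions `y, z, Y, Z` and their conjugate-symmetric
counterparts `yh, zh, Yh, Zh` (satisfying the determinant relations), and with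
`ρ = y·Yh + z·Zh`, `κ = yh·Zh − zh·Yh`, `ρh = yh·Y + zh·Z`, `κh = y·Z − z·Y`, one has
`e = ρ·c − κ·E·d` and `f = κh·E⁻¹·c + ρh·d`. -/
theorem stmt_4 (ζ E : ℂ) (hE : E ≠ 0) (a b : Fin 2 → ℂ)
    (y yh z zh Y Yh Z Zh : ℂ)
    (hdet1 : y * yh + z * zh = 1) (hdet2 : Y * Yh + Z * Zh = 1)
    (c d e f : Fin 2 → ℂ)
    (hc : c = yh • a - (zh * E) • b) (hd : d = (z * E⁻¹) • a + y • b)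
    (he : e = Yh • a - (Zh * E) • b) (hf : f = (Z * E⁻¹) • a + Y • b)
    (ρ κ ρh κh : ℂ)
    (hρ : ρ = y * Yh + z * Zh) (hκ : κ = yh * Zh - zh * Yh)
    (hρh : ρh = yh * Y + zh * Z) (hκh : κh = y * Z - z * Y) :
    e = ρ • c - (κ * E) • d ∧ f = (κh * E⁻¹) • c + ρh • d :=
  stmt_4_general E hE a b y yh z zh Y Yh Z Zh hdet1 c d e f hc hd he hf ρ κ ρh κh hρ hκ hρh hκh
end

section
/- With the scattering-algebra setup of the context, assume additionally y ≠ 0 and ρ ≠ 0. Let D⁽¹⁾ be the 2×2 matrix with columns (a/y, d) and D⁽²⁾ the 2×2 matrix with columns (e/ρ, d). Then D⁽¹⁾ = D⁽²⁾·Q₁, where Q₁ = [[1, 0],[(Ẑ/(yρ))·E, 1]]. (This is the jump relation of the sectionally defined matrix D(x,t,ζ) across the contour Γ₁.) -/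
/-- The 2×2 complex matrix with columns `p` and `q`. -/
def cols (p q : Fin 2 → ℂ) : Matrix (Fin 2) (Fin 2) ℂ :=
  Matrix.of fun i => ![p i, q i]

/-- jump relation of the sectionally defined matrix `D(x,t,ζ)` across `Γ₁`.
With the scattering-algebra setup (columns `a, b` of `G₁`; `c, d` columns of `G₃`;
`e, f` columns of `G₂`; `ρ, κ, ρh, κh` as indicated), if `y ≠ 0` and `ρ ≠ 0`, then the
matrix `D⁽¹⁾ = (a/y | d)` and the matrix `D⁽²⁾ = (e/ρ | d)` satisfy `D⁽¹⁾ = D⁽²⁾ · Q₁`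
with `Q₁ = [[1, 0],[(Zh/(y·ρ))·E, 1]]`. -/
theorem stmt_6 (ζ E : ℂ) (hE : E ≠ 0) (a b : Fin 2 → ℂ)
    (y yh z zh Y Yh Z Zh : ℂ)
    (hdet1 : y * yh + z * zh = 1) (hdet2 : Y * Yh + Z * Zh = 1)
    (c d e f : Fin 2 → ℂ)
    (hc : c = yh • a - (zh * E) • b) (hd : d = (z * E⁻¹) • a + y • b)
    (he : e = Yh • a - (Zh * E) • b) (hf : f = (Z * E⁻¹) • a + Y • b)
    (ρ κ ρh κh : ℂ)
    (hρ : ρ = y * Yh + z * Zh) (hκ : κ = yh * Zh - zh * Yh)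
    (hρh : ρh = yh * Y + zh * Z) (hκh : κh = y * Z - z * Y)
    (hy : y ≠ 0) (hρ0 : ρ ≠ 0) :
    cols (y⁻¹ • a) d = cols (ρ⁻¹ • e) d * !![1, 0; (Zh / (y * ρ)) * E, 1] := by
  subst hd he hρ
  ext i j
  fin_cases j <;>
    simp [cols, Matrix.mul_apply, Fin.sum_univ_two, Matrix.of_apply] <;>
    field_simp <;> ring
end

section
/- With the scattering-algebra setup of the context, assume additionally ρ ≠ 0 and ρ̂ ≠ 0. Let D⁽³⁾ be the 2×2 matrix with columns (c, f/ρ̂) and D⁽²⁾ the 2×2 matrix with columns (e/ρ, d). Then D⁽³⁾ = D⁽²⁾·Q₂, where Q₂ = [[1, (κ̂/ρ̂)·E⁻¹],[(κ/ρ)·E, 1 + κκ̂/(ρρ̂)]]. (This is the jump relation of the sectionally defined matrix D(x,t,ζ) across the contour Γ₂.) -/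
theorem cols_mul_of (p q : Fin 2 → ℂ) (α β γ δ : ℂ) :
    cols p q * !![α, β; γ, δ] = cols (α • p + γ • q) (β • p + δ • q) := by
  ext i j
  fin_cases j <;> simp [cols, Matrix.mul_apply, Fin.sum_univ_two, mul_comm]

theorem rho_mul_rhoh_add_kappa_mul_kappah {R : Type*} [CommRing R] {y yh z zh Y Yh Z Zh : R}
    (hdet : y * yh + z * zh = 1) (hdet' : Y * Yh + Z * Zh = 1) :
    (y * Yh + z * Zh) * (yh * Y + zh * Z) + (yh * Zh - zh * Yh) * (y * Z - z * Y) = 1 := by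
  linear_combination (Y * Yh + Z * Zh) * hdet + hdet'

section ColumnRelations

variable {K V : Type*} [Field K] [AddCommGroup V] [Module K V] {E y yh z zh Y Yh Z Zh : K}

theorem rho_smul_c_eq (hE : E ≠ 0) (hdet : y * yh + z * zh = 1) (a b : V) :
    (y * Yh + z * Zh) • (yh • a - (zh * E) • b) =
      (Yh • a - (Zh * E) • b) + ((yh * Zh - zh * Yh) * E) • ((z * E⁻¹) • a + y • b) := by
  linear_combination (norm := module)
    hdet • (Yh • a - (Zh * E) • b) - mul_inv_cancel₀ hE • (((yh * Zh - zh * Yh) * z) • a)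

theorem rho_mul_E_smul_f_eq (hE : E ≠ 0) (hdet : Y * Yh + Z * Zh = 1) (a b : V) :
    ((y * Yh + z * Zh) * E) • ((Z * E⁻¹) • a + Y • b) =
      (y * Z - z * Y) • (Yh • a - (Zh * E) • b) + E • ((z * E⁻¹) • a + y • b) := by
  linear_combination (norm := module)
    hdet • (z • a + (E * y) • b) + mul_inv_cancel₀ hE • (((y * Yh + z * Zh) * Z - z) • a)

end ColumnRelations

theorem stmt_7_general (E : ℂ) (hE : E ≠ 0) (a b : Fin 2 → ℂ)
    (y yh z zh Y Yh Z Zh : ℂ)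
    (hdet1 : y * yh + z * zh = 1) (hdet2 : Y * Yh + Z * Zh = 1)
    (c d e f : Fin 2 → ℂ)
    (hc : c = yh • a - (zh * E) • b) (hd : d = (z * E⁻¹) • a + y • b)
    (he : e = Yh • a - (Zh * E) • b) (hf : f = (Z * E⁻¹) • a + Y • b)
    (ρ κ ρh κh : ℂ)
    (hρ : ρ = y * Yh + z * Zh) (hκ : κ = yh * Zh - zh * Yh)
    (hρh : ρh = yh * Y + zh * Z) (hκh : κh = y * Z - z * Y)
    (hρ0 : ρ ≠ 0) (hρh0 : ρh ≠ 0) :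
    cols c (ρh⁻¹ • f) =
      cols (ρ⁻¹ • e) d * !![1, (κh / ρh) * E⁻¹; (κ / ρ) * E, 1 + κ * κh / (ρ * ρh)] := by
  have hc' : ρ • c = e + (κ * E) • d := by
    subst hc hd he hρ hκ
    exact rho_smul_c_eq hE hdet1 a b
  have hf' : (ρ * E) • f = κh • e + E • d := by
    subst hd he hf hρ hκh
    exact rho_mul_E_smul_f_eq hE hdet2 a b
  have hone : ρ * ρh + κ * κh = 1 := by
    subst hρ hκ hρh hκh
    exact rho_mul_rhoh_add_kappa_mul_kappah hdet1 hdet2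
  rw [cols_mul_of, (eq_inv_smul_iff₀ hρ0).mpr hc', (eq_inv_smul_iff₀ (mul_ne_zero hρ0 hE)).mpr hf']
  congr 1
  · module
  · match_scalars
    · field_simp
    · field_simp
      linear_combination -hone

/-- jump relation of the sectionally defined matrix `D(x,t,ζ)` across `Γ₂`.
With the scattering-algebra setup, if `ρ ≠ 0` and `ρh ≠ 0`, then `D⁽³⁾ = (c | f/ρh)` and
`D⁽²⁾ = (e/ρ | d)` satisfy `D⁽³⁾ = D⁽²⁾ · Q₂` with
`Q₂ = [[1, (κh/ρh)·E⁻¹],[(κ/ρ)·E, 1 + κ·κh/(ρ·ρh)]]`. -/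
theorem stmt_7 (ζ E : ℂ) (hE : E ≠ 0) (a b : Fin 2 → ℂ)
    (y yh z zh Y Yh Z Zh : ℂ)
    (hdet1 : y * yh + z * zh = 1) (hdet2 : Y * Yh + Z * Zh = 1)
    (c d e f : Fin 2 → ℂ)
    (hc : c = yh • a - (zh * E) • b) (hd : d = (z * E⁻¹) • a + y • b)
    (he : e = Yh • a - (Zh * E) • b) (hf : f = (Z * E⁻¹) • a + Y • b)
    (ρ κ ρh κh : ℂ)
    (hρ : ρ = y * Yh + z * Zh) (hκ : κ = yh * Zh - zh * Yh)
    (hρh : ρh = yh * Y + zh * Z) (hκh : κh = y * Z - z * Y)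
    (hρ0 : ρ ≠ 0) (hρh0 : ρh ≠ 0) :
    cols c (ρh⁻¹ • f) =
      cols (ρ⁻¹ • e) d * !![1, (κh / ρh) * E⁻¹; (κ / ρ) * E, 1 + κ * κh / (ρ * ρh)] :=
  stmt_7_general E hE a b y yh z zh Y Yh Z Zh hdet1 hdet2 c d e f hc hd he hf ρ κ ρh κh hρ hκ hρh
    hκh hρ0 hρh0
end

section
/- With the scattering-algebra setup of the context, assume additionally ŷ ≠ 0 and ρ̂ ≠ 0. Let D⁽³⁾ be the 2×2 matrix with columns (c, f/ρ̂) and D⁽⁴⁾ the 2×2 matrix with columns (c, b/ŷ). Then D⁽³⁾ = D⁽⁴⁾·Q₃, where Q₃ = [[1, (Z/(ŷρ̂))·E⁻¹],[0, 1]]. (This is the jump relation of the sectionally defined matrix D(x,t,ζ) across the contour Γ₃.) -/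
/-- jump relation of the sectionally defined matrix `D(x,t,ζ)` across `Γ₃`.
With the scattering-algebra setup, if `yh ≠ 0` and `ρh ≠ 0`, then `D⁽³⁾ = (c | f/ρh)` and
`D⁽⁴⁾ = (c | b/yh)` satisfy `D⁽³⁾ = D⁽⁴⁾ · Q₃` with `Q₃ = [[1, (Z/(yh·ρh))·E⁻¹],[0, 1]]`. -/
theorem stmt_8 (ζ E : ℂ) (hE : E ≠ 0) (a b : Fin 2 → ℂ)
    (y yh z zh Y Yh Z Zh : ℂ)
    (hdet1 : y * yh + z * zh = 1) (hdet2 : Y * Yh + Z * Zh = 1)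
    (c d e f : Fin 2 → ℂ)
    (hc : c = yh • a - (zh * E) • b) (hd : d = (z * E⁻¹) • a + y • b)
    (he : e = Yh • a - (Zh * E) • b) (hf : f = (Z * E⁻¹) • a + Y • b)
    (ρ κ ρh κh : ℂ)
    (hρ : ρ = y * Yh + z * Zh) (hκ : κ = yh * Zh - zh * Yh)
    (hρh : ρh = yh * Y + zh * Z) (hκh : κh = y * Z - z * Y)
    (hyh : yh ≠ 0) (hρh0 : ρh ≠ 0) :
    cols c (ρh⁻¹ • f) = cols c (yh⁻¹ • b) * !![1, (Z / (yh * ρh)) * E⁻¹; 0, 1] := by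
  subst hc hf hρh
  funext i j
  fin_cases j <;>
    simp [cols, Matrix.mul_apply, Fin.sum_univ_two, Matrix.of_apply] <;>
    field_simp <;> ring
end

section
/- Let y, ŷ, z, ẑ, Y, Ŷ, Z, Ẑ ∈ ℂ satisfy yŷ + zẑ = 1 and YŶ + ZẐ = 1, let E ∈ ℂ be nonzero, set ρ = yŶ + zẐ, κ = ŷẐ − ẑŶ, ρ̂ = ŷY + ẑZ, κ̂ = yZ − zY, and assume y, ŷ, ρ, ρ̂ are all nonzero. Define the jump matrices Q₁ = [[1, 0],[(Ẑ/(yρ))E, 1]], Q₂ = [[1, (κ̂/ρ̂)E⁻¹],[(κ/ρ)E, 1 + κκ̂/(ρρ̂)]], Q₃ = [[1, (Z/(ŷρ̂))E⁻¹],[0, 1]], Q₄ = [[1/(yŷ), (z/ŷ)E⁻¹],[(ẑ/y)E, 1]]. Then Q₄ is invertible and the factorization Q₂ = Q₁·Q₄⁻¹·Q₃ holds. -/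
/-! Since `y ŷ + z ẑ = 1`, the matrix `Q₄` has determinant one, so its inverse is its adjugate.
In the product of the lower unitriangular `Q₁`, `Q₄⁻¹` and the upper unitriangular `Q₃`, the
off-diagonal entries reduce to `Ẑ - ẑ ρ = y κ` and `Z - z ρ̂ = ŷ κ̂`, and the corner entry to the
Cauchy–Binet identity `ρ ρ̂ + κ κ̂ = (y ŷ + z ẑ) (Y Ŷ + Z Ẑ)`. -/

namespace Matrix

variable {R : Type*} [CommRing R]

theorem inv_fin_two_of_det_eq_one {a b c d : R} (h : a * d - b * c = 1) :
    !![a, b; c, d]⁻¹ = !![d, -b; -c, a] := by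
  rw [inv_def, det_fin_two_of, h, Ring.inverse_one, one_smul, adjugate_fin_two_of]

theorem lowerUnitriangular_mul_mul_upperUnitriangular (p q a b c d : R) :
    !![1, 0; p, 1] * !![a, b; c, d] * !![1, q; 0, 1] =
      !![a, a * q + b; p * a + c, (p * a + c) * q + (p * b + d)] := by
  ext i j
  fin_cases i <;> fin_cases j <;> simp

end Matrix

namespace FODNLS

variable {y yh z zh : ℂ}

theorem offDiag_identity (hdet : y * yh + z * zh = 1) {U W ρ κ : ℂ} (hρ : ρ = y * U + z * W)
    (hκ : κ = yh * W - zh * U) (hy : y ≠ 0) (hρ0 : ρ ≠ 0) :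
    W / (y * ρ) - zh / y = κ / ρ := by
  field_simp
  rw [hρ, hκ]
  linear_combination (-W) * hdet

theorem rho_mul_rhoHat_add_kappa_mul_kappaHat (Y Yh Z Zh : ℂ) :
    (y * Yh + z * Zh) * (yh * Y + zh * Z) + (yh * Zh - zh * Yh) * (y * Z - z * Y) =
      (y * yh + z * zh) * (Y * Yh + Z * Zh) := by
  ring

theorem corner_identity (hdet : y * yh + z * zh = 1) {Y Yh Z Zh ρ κ ρh κh : ℂ}
    (hρ : ρ = y * Yh + z * Zh) (hκ : κ = yh * Zh - zh * Yh)
    (hρh : ρh = yh * Y + zh * Z) (hκh : κh = y * Z - z * Y)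
    (hy : y ≠ 0) (hyh : yh ≠ 0) (hρ0 : ρ ≠ 0) (hρh0 : ρh ≠ 0) :
    κ / ρ * (Z / (yh * ρh)) - Zh / (y * ρ) * (z / yh) + 1 / (y * yh) =
      1 + κ * κh / (ρ * ρh) := by
  have hcb : ρ * ρh + κ * κh = Y * Yh + Z * Zh := by
    rw [hρ, hκ, hρh, hκh, rho_mul_rhoHat_add_kappa_mul_kappaHat, hdet, one_mul]
  field_simp
  rw [hcb, hρ, hκ, hρh]
  ring

end FODNLS

open FODNLS in
theorem stmt_10_general (y yh z zh Y Yh Z Zh : ℂ)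
    (hdet1 : y * yh + z * zh = 1)
    (E : ℂ) (hE : E ≠ 0)
    (ρ κ ρh κh : ℂ)
    (hρ : ρ = y * Yh + z * Zh) (hκ : κ = yh * Zh - zh * Yh)
    (hρh : ρh = yh * Y + zh * Z) (hκh : κh = y * Z - z * Y)
    (hy : y ≠ 0) (hyh : yh ≠ 0) (hρ0 : ρ ≠ 0) (hρh0 : ρh ≠ 0)
    (Q₁ Q₂ Q₃ Q₄ : Matrix (Fin 2) (Fin 2) ℂ)
    (hQ₁ : Q₁ = !![1, 0; (Zh / (y * ρ)) * E, 1])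
    (hQ₂ : Q₂ = !![1, (κh / ρh) * E⁻¹; (κ / ρ) * E, 1 + κ * κh / (ρ * ρh)])
    (hQ₃ : Q₃ = !![1, (Z / (yh * ρh)) * E⁻¹; 0, 1])
    (hQ₄ : Q₄ = !![1 / (y * yh), (z / yh) * E⁻¹; (zh / y) * E, 1]) :
    IsUnit Q₄ ∧ Q₂ = Q₁ * Q₄⁻¹ * Q₃ := by
  have hEE : E * E⁻¹ = 1 := mul_inv_cancel₀ hE
  have hdetQ₄ : 1 / (y * yh) * 1 - z / yh * E⁻¹ * (zh / y * E) = 1 := by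
    field_simp
    linear_combination -hdet1
  refine ⟨?_, ?_⟩
  · rw [Matrix.isUnit_iff_isUnit_det, hQ₄, Matrix.det_fin_two_of, hdetQ₄]
    exact isUnit_one
  have h01 := offDiag_identity (by linear_combination hdet1) hρh hκh hyh hρh0
  have h10 := offDiag_identity hdet1 hρ hκ hy hρ0
  have h11 := corner_identity hdet1 hρ hκ hρh hκh hy hyh hρ0 hρh0
  rw [hQ₁, hQ₂, hQ₃, hQ₄, Matrix.inv_fin_two_of_det_eq_one hdetQ₄,
    Matrix.lowerUnitriangular_mul_mul_upperUnitriangular]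
  simp only [EmbeddingLike.apply_eq_iff_eq, Matrix.vecCons_inj, and_true, true_and]
  refine ⟨?_, ?_, ?_⟩
  · linear_combination -E⁻¹ * h01
  · linear_combination -E * h10
  · linear_combination -h11 - Z / (yh * ρh) * h10
      - ((Zh / (y * ρ) - zh / y) * (Z / (yh * ρh)) - Zh / (y * ρ) * (z / yh)) * hEE

/-- factorization of the jump matrices of the Riemann–Hilbert problem for the
FODNLS equation.  With `y·yh + z·zh = 1`, `Y·Yh + Z·Zh = 1`, `E ≠ 0`,
`ρ = y·Yh + z·Zh`, `κ = yh·Zh − zh·Yh`, `ρh = yh·Y + zh·Z`, `κh = y·Z − z·Y`, and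
`y, yh, ρ, ρh` all nonzero, the jump matrices
`Q₁ = [[1, 0],[(Zh/(y·ρ))E, 1]]`, `Q₂ = [[1, (κh/ρh)E⁻¹],[(κ/ρ)E, 1 + κ·κh/(ρ·ρh)]]`,
`Q₃ = [[1, (Z/(yh·ρh))E⁻¹],[0, 1]]`, `Q₄ = [[1/(y·yh), (z/yh)E⁻¹],[(zh/y)E, 1]]`
satisfy: `Q₄` is invertible and `Q₂ = Q₁ · Q₄⁻¹ · Q₃`. -/
theorem stmt_10 (y yh z zh Y Yh Z Zh : ℂ)
    (hdet1 : y * yh + z * zh = 1) (hdet2 : Y * Yh + Z * Zh = 1)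
    (E : ℂ) (hE : E ≠ 0)
    (ρ κ ρh κh : ℂ)
    (hρ : ρ = y * Yh + z * Zh) (hκ : κ = yh * Zh - zh * Yh)
    (hρh : ρh = yh * Y + zh * Z) (hκh : κh = y * Z - z * Y)
    (hy : y ≠ 0) (hyh : yh ≠ 0) (hρ0 : ρ ≠ 0) (hρh0 : ρh ≠ 0)
    (Q₁ Q₂ Q₃ Q₄ : Matrix (Fin 2) (Fin 2) ℂ)
    (hQ₁ : Q₁ = !![1, 0; (Zh / (y * ρ)) * E, 1])
    (hQ₂ : Q₂ = !![1, (κh / ρh) * E⁻¹; (κ / ρ) * E, 1 + κ * κh / (ρ * ρh)])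
    (hQ₃ : Q₃ = !![1, (Z / (yh * ρh)) * E⁻¹; 0, 1])
    (hQ₄ : Q₄ = !![1 / (y * yh), (z / yh) * E⁻¹; (zh / y) * E, 1]) :
    IsUnit Q₄ ∧ Q₂ = Q₁ * Q₄⁻¹ * Q₃ :=
  stmt_10_general y yh z zh Y Yh Z Zh hdet1 E hE ρ κ ρh κh hρ hκ hρh hκh hy hyh hρ0 hρh0 Q₁ Q₂ Q₃ Q₄
    hQ₁ hQ₂ hQ₃ hQ₄
end

section
/- Let U ⊆ ℂ be open and η ∈ U. Let y, ŷ, z, ẑ, Y, Ŷ, Z, Ẑ : U → ℂ be functions with y(η)ŷ(η) + z(η)ẑ(η) = 1 and y(η) ≠ 0, and set ρ = yŶ + zẐ and κ = ŷẐ − ẑŶ (pointwise). Assume ρ(η) = 0, ρ is differentiable at η with ρ′(η) ≠ 0, and ρ(ζ) ≠ 0 for ζ ∈ U \ {η}. Let E : U → ℂ with E(η) ≠ 0, let d : U → ℂ² be given, and let e : U → ℂ² be continuous at η and satisfy e(η) = ρ(η)c − κ(η)E(η)d(η) for some c ∈ ℂ² (so e(η) = −κ(η)E(η)d(η)). Then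 κ(η) = Ẑ(η)/y(η), and lim_{ζ→η, ζ≠η} (ζ − η)·e(ζ)/ρ(ζ) = e(η)/ρ′(η) = −(Ẑ(η)·E(η)/(y(η)·ρ′(η)))·d(η). (This is the residue condition of the matrix D(x,t,ζ) at a simple zero ηⱼ of the function ρ(ζ) = y(ζ)Ȳ(ζ̄) + z(ζ)Z̄(ζ̄).) -/
open Filter Topology

/-- If `(Ŷ, Ẑ)` is orthogonal to `(y, z)` then `(Ŷ, Ẑ) = (Ẑ / y) • (-z, y)`, and pairing with
`(ŷ, ẑ)` through `y ŷ + z ẑ = 1` gives the factor `Ẑ / y`. -/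
theorem mul_sub_mul_eq_div_of_mul_add_mul_eq_zero {K : Type*} [Field K]
    {y yh z zh Yh Zh : K} (hdet : y * yh + z * zh = 1) (hρ : y * Yh + z * Zh = 0) (hy : y ≠ 0) :
    yh * Zh - zh * Yh = Zh / y := by
  field_simp
  linear_combination Zh * hdet - zh * hρ

theorem tendsto_sub_div_of_hasDerivAt_of_eq_zero {𝕜 : Type*} [NontriviallyNormedField 𝕜]
    {f : 𝕜 → 𝕜} {f' a : 𝕜} (hf : HasDerivAt f f' a) (hfa : f a = 0) (hf' : f' ≠ 0) :
    Tendsto (fun z => (z - a) / f z) (𝓝[≠] a) (𝓝 f'⁻¹) := by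
  refine ((hasDerivAt_iff_tendsto_slope.mp hf).inv₀ hf').congr fun z => ?_
  rw [slope_def_field, hfa, sub_zero, inv_div]

theorem tendsto_sub_div_smul_of_hasDerivAt_of_eq_zero {𝕜 E : Type*} [NontriviallyNormedField 𝕜]
    [NormedAddCommGroup E] [NormedSpace 𝕜 E] {f : 𝕜 → 𝕜} {f' a : 𝕜} {e : 𝕜 → E}
    (hf : HasDerivAt f f' a) (hfa : f a = 0) (hf' : f' ≠ 0) (he : ContinuousAt e a) :
    Tendsto (fun z => ((z - a) / f z) • e z) (𝓝[≠] a) (𝓝 (f'⁻¹ • e a)) :=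
  (tendsto_sub_div_of_hasDerivAt_of_eq_zero hf hfa hf').smul
    (he.tendsto.mono_left nhdsWithin_le_nhds)

theorem stmt_13_general (U : Set ℂ) (η : ℂ)
    (y yh z zh Yh Zh : ℂ → ℂ)
    (hdet : y η * yh η + z η * zh η = 1) (hy : y η ≠ 0)
    (ρ κ : ℂ → ℂ)
    (hρdef : ρ = fun ζ => y ζ * Yh ζ + z ζ * Zh ζ)
    (hκdef : κ = fun ζ => yh ζ * Zh ζ - zh ζ * Yh ζ)
    (hρ0 : ρ η = 0) (ρ' : ℂ) (hρd : HasDerivAt ρ ρ' η) (hρ' : ρ' ≠ 0)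
    (E : ℂ → ℂ)
    (d e : ℂ → Fin 2 → ℂ) (he : ContinuousAt e η)
    (c : Fin 2 → ℂ) (hec : e η = ρ η • c - (κ η * E η) • d η) :
    κ η = Zh η / y η ∧
      Tendsto (fun ζ => ((ζ - η) / ρ ζ) • e ζ) (nhdsWithin η (U \ {η}))
        (nhds (ρ'⁻¹ • e η)) ∧
      ρ'⁻¹ • e η = -((Zh η * E η) / (y η * ρ')) • d η := by
  have hκ : κ η = Zh η / y η := by
    subst hκdef hρdef
    exact mul_sub_mul_eq_div_of_mul_add_mul_eq_zero hdet hρ0 hy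
  refine ⟨hκ, ?_, ?_⟩
  · exact (tendsto_sub_div_smul_of_hasDerivAt_of_eq_zero hρd hρ0 hρ' he).mono_left
      (nhdsWithin_mono _ (Set.sdiff_subset_compl _ _))
  · rw [hec, hρ0, zero_smul, zero_sub, hκ, smul_neg, smul_smul, neg_smul]
    congr 2
    field_simp

/-- the residue condition at a simple zero `η` of the function
`ρ(ζ) = y(ζ)Ŷ(ζ) + z(ζ)Ẑ(ζ)`.  Under the stated hypotheses one has `κ(η) = Ẑ(η)/y(η)` and
`lim_{ζ→η, ζ∈U\{η}} (ζ − η)·e(ζ)/ρ(ζ) = e(η)/ρ′(η) = −(Ẑ(η)·E(η)/(y(η)·ρ′(η)))·d(η)`. -/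
theorem stmt_13 (U : Set ℂ) (hU : IsOpen U) (η : ℂ) (hη : η ∈ U)
    (y yh z zh Y Yh Z Zh : ℂ → ℂ)
    (hdet : y η * yh η + z η * zh η = 1) (hy : y η ≠ 0)
    (ρ κ : ℂ → ℂ)
    (hρdef : ρ = fun ζ => y ζ * Yh ζ + z ζ * Zh ζ)
    (hκdef : κ = fun ζ => yh ζ * Zh ζ - zh ζ * Yh ζ)
    (hρ0 : ρ η = 0) (ρ' : ℂ) (hρd : HasDerivAt ρ ρ' η) (hρ' : ρ' ≠ 0)
    (hρne : ∀ ζ ∈ U \ {η}, ρ ζ ≠ 0)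
    (E : ℂ → ℂ) (hE : E η ≠ 0)
    (d e : ℂ → Fin 2 → ℂ) (he : ContinuousAt e η)
    (c : Fin 2 → ℂ) (hec : e η = ρ η • c - (κ η * E η) • d η) :
    κ η = Zh η / y η ∧
      Tendsto (fun ζ => ((ζ - η) / ρ ζ) • e ζ) (nhdsWithin η (U \ {η}))
        (nhds (ρ'⁻¹ • e η)) ∧
      ρ'⁻¹ • e η = -((Zh η * E η) / (y η * ρ')) • d η :=
  stmt_13_general U η y yh z zh Yh Zh hdet hy ρ κ hρdef hκdef hρ0 ρ' hρd hρ' E d e he c hec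
end

section
/- Let u₀ : ℝ → ℂ be a Schwartz function and let ζ ∈ ℂ with Im ζ ≥ 0. Then there exists a unique pair of bounded continuous functions v₁, v₂ : [0,∞) → ℂ satisfying, for all x ≥ 0, v₁(x) = −∫ₓ^∞ e^{−2iζ(x−ξ)} u₀(ξ) v₂(ξ) dξ and v₂(x) = 1 + ∫ₓ^∞ conj(u₀(ξ)) v₁(ξ) dξ, where all integrals converge absolutely. Moreover this solution satisfies v₁(x) → 0 and v₂(x) → 1 as x → ∞. -/
open MeasureTheory

/-- The pair `(v₁, v₂)` is a bounded continuous solution on `[0,∞)` of the Volterra system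
`v₁(x) = −∫ₓ^∞ e^{−2iζ(x−ξ)} u₀(ξ) v₂(ξ) dξ`,
`v₂(x) = 1 + ∫ₓ^∞ conj(u₀(ξ)) v₁(ξ) dξ`, with all integrals converging absolutely. -/
def IsVolterraSol (u₀ : SchwartzMap ℝ ℂ) (ζ : ℂ) (v : (ℝ → ℂ) × (ℝ → ℂ)) : Prop :=
  ContinuousOn v.1 (Set.Ici 0) ∧ ContinuousOn v.2 (Set.Ici 0) ∧
  (∃ C : ℝ, ∀ x ≥ (0 : ℝ), ‖v.1 x‖ ≤ C ∧ ‖v.2 x‖ ≤ C) ∧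
  ∀ x ≥ (0 : ℝ),
    IntegrableOn
      (fun ξ : ℝ => Complex.exp (-(2 * Complex.I * ζ * ((x - ξ : ℝ) : ℂ))) * u₀ ξ * v.2 ξ)
      (Set.Ioi x) ∧
    IntegrableOn (fun ξ : ℝ => (starRingEnd ℂ) (u₀ ξ) * v.1 ξ) (Set.Ioi x) ∧
    v.1 x =
      -∫ ξ in Set.Ioi x, Complex.exp (-(2 * Complex.I * ζ * ((x - ξ : ℝ) : ℂ))) * u₀ ξ * v.2 ξ ∧
    v.2 x = 1 + ∫ ξ in Set.Ioi x, (starRingEnd ℂ) (u₀ ξ) * v.1 ξ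

/-!
With `ω(x) = exp (2 ∫ₓ^∞ |u₀|)` one has `∫ₓ^∞ |u₀| ω = (ω(x) - 1) / 2`, because `-ω/2` is a
primitive of `|u₀| ω`. Since `|e^{-2iζ(x-ξ)}| ≤ 1` for `ξ ≥ x`, both Volterra operators of the
system therefore have norm at most `1/2` for the weighted norm `sup |v| / ω`, which is equivalent
to the sup norm because `1 ≤ ω ≤ exp (2 ‖u₀‖₁)`. Existence follows from the Banach fixed point
theorem applied to the system conjugated by `ω` on bounded continuous functions on `ℝ`;
uniqueness from the same estimate, which turns any bound `M` for the weighted difference of two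
solutions on `[0, ∞)` into the bound `M / 2`. Finally `|v₁(x)|, |v₂(x) - 1| ≤ C (ω(x) - 1) / 2`,
which tends to `0` because `ω(x) → 1`.
-/

open MeasureTheory Set Filter Topology
open scoped BoundedContinuousFunction

section TailWeight

variable {a : ℝ → ℝ}

noncomputable def tailIntegral (a : ℝ → ℝ) (x : ℝ) : ℝ := ∫ ξ in Ioi x, a ξ

noncomputable def tailWeight (a : ℝ → ℝ) (x : ℝ) : ℝ := Real.exp (2 * tailIntegral a x)

lemma tailIntegral_nonneg (ha0 : ∀ x, 0 ≤ a x) (x : ℝ) : 0 ≤ tailIntegral a x :=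
  setIntegral_nonneg measurableSet_Ioi fun ξ _ => ha0 ξ

lemma tailIntegral_le_integral (ha0 : ∀ x, 0 ≤ a x) (hai : Integrable a) (x : ℝ) :
    tailIntegral a x ≤ ∫ ξ, a ξ :=
  setIntegral_le_integral hai (Eventually.of_forall ha0)

lemma hasDerivAt_tailIntegral (hac : Continuous a) (hai : Integrable a) (x : ℝ) :
    HasDerivAt (tailIntegral a) (-a x) x := by
  have hsplit : ∀ y, tailIntegral a y = tailIntegral a 0 - ∫ ξ in (0 : ℝ)..y, a ξ := fun y => by
    rw [tailIntegral, tailIntegral,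
      ← intervalIntegral.integral_Ioi_sub_Ioi' hai.integrableOn hai.integrableOn, sub_sub_cancel]
  simpa [← funext hsplit] using
    ((hac.integral_hasStrictDerivAt 0 x).hasDerivAt.const_sub (tailIntegral a 0))

lemma tendsto_tailIntegral_atTop : Tendsto (tailIntegral a) atTop (𝓝 0) :=
  tendsto_integral_Ioi_zero tendsto_id

lemma tailWeight_pos (x : ℝ) : 0 < tailWeight a x := Real.exp_pos _

lemma one_le_tailWeight (ha0 : ∀ x, 0 ≤ a x) (x : ℝ) : 1 ≤ tailWeight a x :=
  Real.one_le_exp (by linarith [tailIntegral_nonneg ha0 x])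

lemma tailWeight_le (ha0 : ∀ x, 0 ≤ a x) (hai : Integrable a) (x : ℝ) :
    tailWeight a x ≤ Real.exp (2 * ∫ ξ, a ξ) :=
  Real.exp_le_exp.2 (by linarith [tailIntegral_le_integral ha0 hai x])

lemma hasDerivAt_tailWeight (hac : Continuous a) (hai : Integrable a) (x : ℝ) :
    HasDerivAt (tailWeight a) (-2 * a x * tailWeight a x) x := by
  have h := ((hasDerivAt_tailIntegral hac hai x).const_mul 2).exp
  rwa [show Real.exp (2 * tailIntegral a x) * (2 * -a x) = -2 * a x * tailWeight a x by
    rw [tailWeight]; ring] at h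

lemma continuous_tailWeight (hac : Continuous a) (hai : Integrable a) :
    Continuous (tailWeight a) :=
  continuous_iff_continuousAt.2 fun x => (hasDerivAt_tailWeight hac hai x).continuousAt

lemma tendsto_tailWeight_atTop : Tendsto (tailWeight a) atTop (𝓝 1) := by
  have h := ((tendsto_tailIntegral_atTop (a := a)).const_mul 2).rexp
  rwa [mul_zero, Real.exp_zero] at h

lemma integrable_mul_tailWeight (ha0 : ∀ x, 0 ≤ a x) (hac : Continuous a) (hai : Integrable a) :
    Integrable fun ξ => a ξ * tailWeight a ξ := by
  refine (hai.mul_const (Real.exp (2 * ∫ ξ, a ξ))).mono'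
    (hac.mul (continuous_tailWeight hac hai)).aestronglyMeasurable (ae_of_all _ fun ξ => ?_)
  rw [Real.norm_eq_abs, abs_of_nonneg (mul_nonneg (ha0 ξ) (tailWeight_pos ξ).le)]
  exact mul_le_mul_of_nonneg_left (tailWeight_le ha0 hai ξ) (ha0 ξ)

lemma integral_Ioi_mul_tailWeight (ha0 : ∀ x, 0 ≤ a x) (hac : Continuous a)
    (hai : Integrable a) (x : ℝ) :
    ∫ ξ in Ioi x, a ξ * tailWeight a ξ = (tailWeight a x - 1) / 2 := by
  have hderiv : ∀ ξ ∈ Ici x, HasDerivAt (fun y => -tailWeight a y / 2) (a ξ * tailWeight a ξ) ξ :=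
    fun ξ _ => by
      have h := (hasDerivAt_tailWeight hac hai ξ).neg.div_const 2
      rwa [show -(-2 * a ξ * tailWeight a ξ) / 2 = a ξ * tailWeight a ξ by ring] at h
  rw [integral_Ioi_of_hasDerivAt_of_tendsto' hderiv
    (integrable_mul_tailWeight ha0 hac hai).integrableOn
    ((tendsto_tailWeight_atTop.neg).div_const 2)]
  ring

lemma norm_inv_tailWeight_smul_le {E : Type*} [SeminormedAddCommGroup E] [NormedSpace ℝ E]
    {z : E} {c x : ℝ} (hc : 0 ≤ c) (hz : ‖z‖ ≤ c * ((tailWeight a x - 1) / 2)) :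
    ‖(tailWeight a x)⁻¹ • z‖ ≤ c / 2 := by
  have hw := tailWeight_pos (a := a) x
  rw [norm_smul, norm_inv, Real.norm_of_nonneg hw.le, inv_mul_le_iff₀ hw]
  nlinarith

lemma norm_tailWeight_smul_le {E : Type*} [SeminormedAddCommGroup E] [NormedSpace ℝ E]
    (p : ℝ →ᵇ E) (ξ : ℝ) : ‖tailWeight a ξ • p ξ‖ ≤ ‖p‖ * tailWeight a ξ := by
  rw [norm_smul, Real.norm_of_nonneg (tailWeight_pos ξ).le, mul_comm]
  exact mul_le_mul_of_nonneg_right (p.norm_coe_le_norm ξ) (tailWeight_pos ξ).le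

end TailWeight

section VolterraOperator

variable {a : ℝ → ℝ} {k : ℝ → ℝ → ℂ}

noncomputable def volterra (k : ℝ → ℝ → ℂ) (φ : ℝ → ℂ) (x : ℝ) : ℂ :=
  ∫ ξ in Ioi x, k x ξ * φ ξ

lemma integrableOn_volterra (ha0 : ∀ x, 0 ≤ a x) (hac : Continuous a) (hai : Integrable a)
    (hk : ∀ x ξ, x < ξ → ‖k x ξ‖ ≤ a ξ) (hkc : ∀ x, Continuous (k x)) {φ : ℝ → ℂ} {c : ℝ}
    (hφc : Continuous φ) (hφ : ∀ ξ, ‖φ ξ‖ ≤ c * tailWeight a ξ) (x : ℝ) :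
    IntegrableOn (fun ξ => k x ξ * φ ξ) (Ioi x) :=
  ((integrable_mul_tailWeight ha0 hac hai).const_mul c).integrableOn.mono'
    ((hkc x).mul hφc).aestronglyMeasurable.restrict
    ((ae_restrict_iff' measurableSet_Ioi).2 (ae_of_all _ fun ξ hξ =>
      (norm_mul_le_of_le (hk x ξ hξ) (hφ ξ)).trans_eq (by ring)))

lemma norm_volterra_le (ha0 : ∀ x, 0 ≤ a x) (hac : Continuous a) (hai : Integrable a)
    (hk : ∀ x ξ, x < ξ → ‖k x ξ‖ ≤ a ξ) {φ : ℝ → ℂ} {c x : ℝ}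
    (hφ : ∀ ξ, x < ξ → ‖φ ξ‖ ≤ c * tailWeight a ξ) :
    ‖volterra k φ x‖ ≤ c * ((tailWeight a x - 1) / 2) := by
  calc ‖volterra k φ x‖ ≤ ∫ ξ in Ioi x, c * (a ξ * tailWeight a ξ) :=
        norm_integral_le_of_norm_le
          ((integrable_mul_tailWeight ha0 hac hai).const_mul c).integrableOn
          ((ae_restrict_iff' measurableSet_Ioi).2 (ae_of_all _ fun ξ hξ =>
            (norm_mul_le_of_le (hk x ξ hξ) (hφ ξ hξ)).trans_eq (by ring)))
    _ = c * ((tailWeight a x - 1) / 2) := by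
        rw [integral_const_mul, integral_Ioi_mul_tailWeight ha0 hac hai]

lemma volterra_sub {φ ψ : ℝ → ℂ} {x : ℝ} (hφ : IntegrableOn (fun ξ => k x ξ * φ ξ) (Ioi x))
    (hψ : IntegrableOn (fun ξ => k x ξ * ψ ξ) (Ioi x)) :
    volterra k φ x - volterra k ψ x = volterra k (φ - ψ) x := by
  simp only [volterra, Pi.sub_apply, mul_sub]
  exact (integral_sub hφ hψ).symm

lemma tendsto_volterra_atTop (ha0 : ∀ x, 0 ≤ a x) (hac : Continuous a) (hai : Integrable a)
    (hk : ∀ x ξ, x < ξ → ‖k x ξ‖ ≤ a ξ) {φ : ℝ → ℂ} {c : ℝ}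
    (hφ : ∀ ξ, ‖φ ξ‖ ≤ c * tailWeight a ξ) :
    Tendsto (volterra k φ) atTop (𝓝 0) := by
  refine squeeze_zero_norm (fun x => norm_volterra_le ha0 hac hai hk fun ξ _ => hφ ξ) ?_
  simpa using ((tendsto_tailWeight_atTop.sub_const 1).div_const 2).const_mul c

lemma continuous_integral_Ioi {E : Type*} [NormedAddCommGroup E] [NormedSpace ℝ E]
    {f : ℝ → E} (hf : ∀ y, IntegrableOn f (Ioi y)) :
    Continuous fun x => ∫ ξ in Ioi x, f ξ :=
  continuous_iff_continuousAt.2 fun x =>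
    (hf (x - 1)).continuousOn_Ici_primitive_Ioi.continuousAt (Ici_mem_nhds (by linarith))

lemma continuous_volterra_of_eq_mul {α β : ℝ → ℂ} (hk : ∀ x ξ, k x ξ = α x * β ξ)
    (hα : Continuous α) (hα0 : ∀ x, α x ≠ 0) {φ : ℝ → ℂ}
    (hint : ∀ y, IntegrableOn (fun ξ => k y ξ * φ ξ) (Ioi y)) :
    Continuous (volterra k φ) := by
  have hβ : ∀ y, IntegrableOn (fun ξ => β ξ * φ ξ) (Ioi y) := fun y =>
    IntegrableOn.congr_fun ((hint y).const_mul (α y)⁻¹)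
      (fun ξ _ => by rw [hk, mul_assoc, inv_mul_cancel_left₀ (hα0 y)]) measurableSet_Ioi
  have hsep : volterra k φ = fun x => α x * ∫ ξ in Ioi x, β ξ * φ ξ := funext fun x => by
    simp only [volterra, hk, mul_assoc, integral_const_mul]
  rw [hsep]
  exact hα.mul (continuous_integral_Ioi hβ)

end VolterraOperator

section Kernels

variable {u : ℝ → ℂ} {ζ : ℂ}

noncomputable def expKernel (ζ : ℂ) (u : ℝ → ℂ) (x ξ : ℝ) : ℂ :=
  Complex.exp (-(2 * Complex.I * ζ * ((x - ξ : ℝ) : ℂ))) * u ξ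

noncomputable def conjKernel (u : ℝ → ℂ) (_x ξ : ℝ) : ℂ := starRingEnd ℂ (u ξ)

lemma norm_expKernel_le (hζ : 0 ≤ ζ.im) {x ξ : ℝ} (h : x < ξ) :
    ‖expKernel ζ u x ξ‖ ≤ ‖u ξ‖ := by
  rw [expKernel, norm_mul, Complex.norm_exp]
  refine mul_le_of_le_one_left (norm_nonneg _) (Real.exp_le_one_iff.2 ?_)
  have hre : (-(2 * Complex.I * ζ * ((x - ξ : ℝ) : ℂ))).re = 2 * ζ.im * (x - ξ) := by
    simp [Complex.mul_re, Complex.mul_im]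
  rw [hre]
  nlinarith

lemma norm_conjKernel (x ξ : ℝ) : ‖conjKernel u x ξ‖ = ‖u ξ‖ := RCLike.norm_conj _

lemma expKernel_eq_mul (x ξ : ℝ) :
    expKernel ζ u x ξ = Complex.exp (-(2 * Complex.I * ζ) * x) *
      (Complex.exp (2 * Complex.I * ζ * ξ) * u ξ) := by
  rw [expKernel, ← mul_assoc, ← Complex.exp_add]
  push_cast
  ring_nf

lemma continuous_expKernel (hu : Continuous u) (x : ℝ) : Continuous (expKernel ζ u x) := by
  unfold expKernel
  fun_prop

lemma continuous_conjKernel (hu : Continuous u) (x : ℝ) : Continuous (conjKernel u x) :=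
  Complex.continuous_conj.comp hu

end Kernels

section System

variable {u : ℝ → ℂ} {ζ : ℂ}

/-- The right-hand side of the system, acting on `V ξ = (v₁ ξ, v₂ ξ)`. -/
noncomputable def volterraSystem (ζ : ℂ) (u : ℝ → ℂ) (V : ℝ → ℂ × ℂ) (x : ℝ) : ℂ × ℂ :=
  (-volterra (expKernel ζ u) (fun ξ => (V ξ).2) x,
    1 + volterra (conjKernel u) (fun ξ => (V ξ).1) x)

def SystemIntegrableAt (ζ : ℂ) (u : ℝ → ℂ) (V : ℝ → ℂ × ℂ) (x : ℝ) : Prop :=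
  IntegrableOn (fun ξ => expKernel ζ u x ξ * (V ξ).2) (Ioi x) ∧
    IntegrableOn (fun ξ => conjKernel u x ξ * (V ξ).1) (Ioi x)

lemma systemIntegrableAt_of_continuous (hu : Continuous u) (hui : Integrable u) (hζ : 0 ≤ ζ.im)
    {V : ℝ → ℂ × ℂ} (hVc : Continuous V) {c : ℝ}
    (hV : ∀ ξ, ‖V ξ‖ ≤ c * tailWeight (‖u ·‖) ξ) (x : ℝ) : SystemIntegrableAt ζ u V x :=
  ⟨integrableOn_volterra (fun _ => norm_nonneg _) hu.norm hui.norm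
      (fun _ _ h => norm_expKernel_le hζ h) (continuous_expKernel hu) hVc.snd
      (fun ξ => (norm_snd_le _).trans (hV ξ)) x,
    integrableOn_volterra (fun _ => norm_nonneg _) hu.norm hui.norm
      (fun x ξ _ => (norm_conjKernel x ξ).le) (continuous_conjKernel hu) hVc.fst
      (fun ξ => (norm_fst_le _).trans (hV ξ)) x⟩

lemma continuous_volterraSystem (hu : Continuous u) (hui : Integrable u) (hζ : 0 ≤ ζ.im)
    {V : ℝ → ℂ × ℂ} (hVc : Continuous V) {c : ℝ}
    (hV : ∀ ξ, ‖V ξ‖ ≤ c * tailWeight (‖u ·‖) ξ) : Continuous (volterraSystem ζ u V) := by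
  have hint := systemIntegrableAt_of_continuous hu hui hζ hVc hV
  refine Continuous.prodMk ?_ (continuous_const.add ?_)
  · exact (continuous_volterra_of_eq_mul expKernel_eq_mul (by fun_prop)
      (fun _ => Complex.exp_ne_zero _) fun y => (hint y).1).neg
  · exact continuous_volterra_of_eq_mul (α := fun _ => 1) (β := fun ξ => starRingEnd ℂ (u ξ))
      (fun _ _ => (one_mul _).symm)
      continuous_const (fun _ => one_ne_zero) fun y => (hint y).2

lemma volterraSystem_zero (x : ℝ) : volterraSystem ζ u (fun _ => 0) x = (0, 1) := by
  simp [volterraSystem, volterra]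

lemma norm_volterraSystem_sub_le (hu : Continuous u) (hui : Integrable u) (hζ : 0 ≤ ζ.im)
    {V W : ℝ → ℂ × ℂ} {c x : ℝ} (hV : SystemIntegrableAt ζ u V x)
    (hW : SystemIntegrableAt ζ u W x)
    (hVW : ∀ ξ, x < ξ → ‖V ξ - W ξ‖ ≤ c * tailWeight (‖u ·‖) ξ) :
    ‖volterraSystem ζ u V x - volterraSystem ζ u W x‖ ≤
      c * ((tailWeight (‖u ·‖) x - 1) / 2) := by
  refine norm_prod_le_iff.2 ⟨?_, ?_⟩
  · rw [Prod.fst_sub, volterraSystem, volterraSystem, neg_sub_neg, norm_sub_rev,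
      volterra_sub hV.1 hW.1]
    exact norm_volterra_le (fun _ => norm_nonneg _) hu.norm hui.norm
      (fun _ _ h => norm_expKernel_le hζ h) fun ξ h => (norm_snd_le _).trans (hVW ξ h)
  · rw [Prod.snd_sub, volterraSystem, volterraSystem, add_sub_add_left_eq_sub,
      volterra_sub hV.2 hW.2]
    exact norm_volterra_le (fun _ => norm_nonneg _) hu.norm hui.norm
      (fun x ξ _ => (norm_conjKernel x ξ).le) fun ξ h => (norm_fst_le _).trans (hVW ξ h)

end System

section Existence

variable {u : ℝ → ℂ} {ζ : ℂ}

lemma continuous_tailWeight_smul (hu : Continuous u) (hui : Integrable u) (p : ℝ →ᵇ ℂ × ℂ) :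
    Continuous fun ξ => tailWeight (‖u ·‖) ξ • p ξ :=
  (continuous_tailWeight hu.norm hui.norm).smul p.continuous

lemma norm_inv_smul_volterraSystem_sub_le (hu : Continuous u) (hui : Integrable u)
    (hζ : 0 ≤ ζ.im) (p q : ℝ →ᵇ ℂ × ℂ) (x : ℝ) :
    ‖(tailWeight (‖u ·‖) x)⁻¹ •
        (volterraSystem ζ u (fun ξ => tailWeight (‖u ·‖) ξ • p ξ) x -
          volterraSystem ζ u (fun ξ => tailWeight (‖u ·‖) ξ • q ξ) x)‖ ≤ dist p q / 2 := by
  refine norm_inv_tailWeight_smul_le dist_nonneg (norm_volterraSystem_sub_le hu hui hζ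
    (systemIntegrableAt_of_continuous hu hui hζ (continuous_tailWeight_smul hu hui p)
      (norm_tailWeight_smul_le p) x)
    (systemIntegrableAt_of_continuous hu hui hζ (continuous_tailWeight_smul hu hui q)
      (norm_tailWeight_smul_le q) x) fun ξ _ => ?_)
  rw [← smul_sub, dist_eq_norm]
  exact norm_tailWeight_smul_le (p - q) ξ

lemma norm_inv_smul_volterraSystem_le (hu : Continuous u) (hui : Integrable u)
    (hζ : 0 ≤ ζ.im) (p : ℝ →ᵇ ℂ × ℂ) (x : ℝ) :
    ‖(tailWeight (‖u ·‖) x)⁻¹ • volterraSystem ζ u (fun ξ => tailWeight (‖u ·‖) ξ • p ξ) x‖ ≤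
      ‖p‖ / 2 + 1 := by
  have hΦ0 : volterraSystem ζ u (fun ξ => tailWeight (‖u ·‖) ξ • (0 : ℝ →ᵇ ℂ × ℂ) ξ) x =
      (0, 1) := by
    simpa using volterraSystem_zero (ζ := ζ) (u := u) x
  have hsub := norm_inv_smul_volterraSystem_sub_le hu hui hζ p 0 x
  rw [hΦ0, dist_zero_right, smul_sub] at hsub
  have hΦ0_le : ‖(tailWeight (‖u ·‖) x)⁻¹ • ((0, 1) : ℂ × ℂ)‖ ≤ 1 := by
    rw [norm_smul, norm_inv, Real.norm_of_nonneg (tailWeight_pos x).le]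
    simpa using inv_le_one_of_one_le₀ (one_le_tailWeight (fun _ => norm_nonneg _) x)
  linarith [norm_sub_norm_le
    ((tailWeight (‖u ·‖) x)⁻¹ • volterraSystem ζ u (fun ξ => tailWeight (‖u ·‖) ξ • p ξ) x)
    ((tailWeight (‖u ·‖) x)⁻¹ • ((0, 1) : ℂ × ℂ))]

noncomputable def weightedSystem (hu : Continuous u) (hui : Integrable u) (hζ : 0 ≤ ζ.im)
    (p : ℝ →ᵇ ℂ × ℂ) : ℝ →ᵇ ℂ × ℂ :=
  BoundedContinuousFunction.ofNormedAddCommGroup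
    (fun x => (tailWeight (‖u ·‖) x)⁻¹ •
      volterraSystem ζ u (fun ξ => tailWeight (‖u ·‖) ξ • p ξ) x)
    (((continuous_tailWeight hu.norm hui.norm).inv₀ fun x => (tailWeight_pos x).ne').smul
      (continuous_volterraSystem hu hui hζ (continuous_tailWeight_smul hu hui p)
        (norm_tailWeight_smul_le p)))
    (‖p‖ / 2 + 1) (norm_inv_smul_volterraSystem_le hu hui hζ p)

lemma weightedSystem_apply (hu : Continuous u) (hui : Integrable u) (hζ : 0 ≤ ζ.im)
    (p : ℝ →ᵇ ℂ × ℂ) (x : ℝ) :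
    weightedSystem hu hui hζ p x = (tailWeight (‖u ·‖) x)⁻¹ •
      volterraSystem ζ u (fun ξ => tailWeight (‖u ·‖) ξ • p ξ) x :=
  rfl

lemma contractingWith_weightedSystem (hu : Continuous u) (hui : Integrable u)
    (hζ : 0 ≤ ζ.im) : ContractingWith 2⁻¹ (weightedSystem hu hui hζ) := by
  refine ⟨by norm_num, LipschitzWith.of_dist_le_mul fun p q => ?_⟩
  refine (BoundedContinuousFunction.dist_le (by positivity)).2 fun x => ?_
  rw [dist_eq_norm, NNReal.coe_inv, NNReal.coe_ofNat, ← div_eq_inv_mul, weightedSystem_apply,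
    weightedSystem_apply, ← smul_sub]
  exact norm_inv_smul_volterraSystem_sub_le hu hui hζ p q x

lemma exists_fixedPoint_volterraSystem (hu : Continuous u) (hui : Integrable u)
    (hζ : 0 ≤ ζ.im) :
    ∃ V : ℝ → ℂ × ℂ, Continuous V ∧ (∃ c, 0 ≤ c ∧ ∀ ξ, ‖V ξ‖ ≤ c * tailWeight (‖u ·‖) ξ) ∧
      volterraSystem ζ u V = V := by
  obtain ⟨p, hp⟩ : ∃ p, Function.IsFixedPt (weightedSystem hu hui hζ) p :=
    ⟨_, (contractingWith_weightedSystem hu hui hζ).fixedPoint_isFixedPt⟩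
  refine ⟨_, continuous_tailWeight_smul hu hui p, ⟨‖p‖, norm_nonneg _, norm_tailWeight_smul_le p⟩,
    funext fun x => (inv_smul_eq_iff₀ (tailWeight_pos x).ne').1 (by
      rw [← weightedSystem_apply hu hui hζ, hp])⟩

end Existence

lemma le_zero_of_forall_le_half {α : Type*} {s : Set α} {g : α → ℝ} {C : ℝ}
    (hC : ∀ x ∈ s, g x ≤ C) (hhalf : ∀ M, 0 ≤ M → (∀ x ∈ s, g x ≤ M) → ∀ x ∈ s, g x ≤ M / 2) :
    ∀ x ∈ s, g x ≤ 0 := by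
  have hpow : ∀ n : ℕ, ∀ x ∈ s, g x ≤ max C 0 / 2 ^ n := by
    intro n
    induction n with
    | zero => simpa using fun x hx => (hC x hx).trans (le_max_left C 0)
    | succ n ih =>
      simpa [pow_succ, div_div] using hhalf _ (by positivity) ih
  have hlim : Tendsto (fun n : ℕ => max C 0 / 2 ^ n) atTop (𝓝 0) :=
    tendsto_const_nhds.div_atTop (tendsto_pow_atTop_atTop_of_one_lt one_lt_two)
  exact fun x hx => ge_of_tendsto hlim (Eventually.of_forall fun n => hpow n x hx)

lemma IsVolterraSol.eq_of_isVolterraSol {u₀ : SchwartzMap ℝ ℂ} {ζ : ℂ} (hζ : 0 ≤ ζ.im)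
    {v w : (ℝ → ℂ) × (ℝ → ℂ)} (hw : IsVolterraSol u₀ ζ w) (hv : IsVolterraSol u₀ ζ v) :
    ∀ x ≥ (0 : ℝ), w.1 x = v.1 x ∧ w.2 x = v.2 x := by
  obtain ⟨-, -, ⟨Cv, hCv⟩, hv⟩ := hv
  obtain ⟨-, -, ⟨Cw, hCw⟩, hw⟩ := hw
  set V : ℝ → ℂ × ℂ := fun ξ => (v.1 ξ, v.2 ξ)
  set W : ℝ → ℂ × ℂ := fun ξ => (w.1 ξ, w.2 ξ)
  set ω := tailWeight (‖u₀ ·‖)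
  have hVfix : ∀ x ≥ (0 : ℝ), volterraSystem ζ u₀ V x = V x := fun x hx =>
    Prod.ext (hv x hx).2.2.1.symm (hv x hx).2.2.2.symm
  have hWfix : ∀ x ≥ (0 : ℝ), volterraSystem ζ u₀ W x = W x := fun x hx =>
    Prod.ext (hw x hx).2.2.1.symm (hw x hx).2.2.2.symm
  have hnorm : ∀ x, ‖(ω x)⁻¹ • (W x - V x)‖ = (ω x)⁻¹ * ‖W x - V x‖ := fun x => by
    rw [norm_smul, norm_inv, Real.norm_of_nonneg (tailWeight_pos x).le]
  have hbdd : ∀ x ∈ Ici (0 : ℝ), ‖(ω x)⁻¹ • (W x - V x)‖ ≤ Cw + Cv := fun x hx => by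
    rw [hnorm]
    refine (mul_le_of_le_one_left (norm_nonneg _)
      (inv_le_one_of_one_le₀ (one_le_tailWeight (fun _ => norm_nonneg _) x))).trans
      ((norm_sub_le _ _).trans (add_le_add ?_ ?_))
    exacts [norm_prod_le_iff.2 (hCw x hx), norm_prod_le_iff.2 (hCv x hx)]
  have hhalf : ∀ M, 0 ≤ M → (∀ x ∈ Ici (0 : ℝ), ‖(ω x)⁻¹ • (W x - V x)‖ ≤ M) →
      ∀ x ∈ Ici (0 : ℝ), ‖(ω x)⁻¹ • (W x - V x)‖ ≤ M / 2 := by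
    intro M hM hle x (hx : 0 ≤ x)
    have hWV : ∀ ξ, x < ξ → ‖W ξ - V ξ‖ ≤ M * ω ξ := fun ξ hξ => by
      have := hle ξ (hx.trans hξ.le)
      rwa [hnorm, inv_mul_le_iff₀ (tailWeight_pos ξ), mul_comm] at this
    rw [← hWfix x hx, ← hVfix x hx]
    exact norm_inv_tailWeight_smul_le hM (norm_volterraSystem_sub_le u₀.continuous
      u₀.integrable hζ ⟨(hw x hx).1, (hw x hx).2.1⟩ ⟨(hv x hx).1, (hv x hx).2.1⟩ hWV)
  intro x hx
  have hzero := norm_le_zero_iff.1 (le_zero_of_forall_le_half hbdd hhalf x hx)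
  rw [smul_eq_zero_iff_right (inv_ne_zero (tailWeight_pos x).ne'), sub_eq_zero] at hzero
  exact Prod.ext_iff.1 hzero

lemma exists_isVolterraSol (u₀ : SchwartzMap ℝ ℂ) {ζ : ℂ} (hζ : 0 ≤ ζ.im) :
    ∃ v : (ℝ → ℂ) × (ℝ → ℂ), IsVolterraSol u₀ ζ v ∧
      Tendsto v.1 atTop (𝓝 0) ∧ Tendsto v.2 atTop (𝓝 1) := by
  obtain ⟨V, hVc, ⟨c, hc0, hc⟩, hfix⟩ :=
    exists_fixedPoint_volterraSystem u₀.continuous u₀.integrable hζ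
  have hint := systemIntegrableAt_of_continuous u₀.continuous u₀.integrable hζ hVc hc
  have hV : ∀ x, V x = volterraSystem ζ u₀ V x := fun x => (congrFun hfix x).symm
  have hbdd : ∀ x, ‖V x‖ ≤ c * Real.exp (2 * ∫ ξ, ‖u₀ ξ‖) := fun x =>
    (hc x).trans (mul_le_mul_of_nonneg_left
      (tailWeight_le (fun _ => norm_nonneg _) u₀.integrable.norm x) hc0)
  refine ⟨(fun x => (V x).1, fun x => (V x).2), ⟨hVc.fst.continuousOn, hVc.snd.continuousOn,
    ⟨_, fun x _ => norm_prod_le_iff.1 (hbdd x)⟩,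
    fun x _ => ⟨(hint x).1, (hint x).2, congrArg Prod.fst (hV x), congrArg Prod.snd (hV x)⟩⟩,
    ?_, ?_⟩
  · have h := (tendsto_volterra_atTop (fun _ => norm_nonneg _) u₀.continuous.norm
      u₀.integrable.norm (fun _ _ h => norm_expKernel_le hζ h)
      fun ξ => (norm_snd_le _).trans (hc ξ)).neg
    rw [neg_zero] at h
    exact h.congr fun x => (congrArg Prod.fst (hV x)).symm
  · have h := (tendsto_volterra_atTop (fun _ => norm_nonneg _) u₀.continuous.norm
      u₀.integrable.norm (fun x ξ _ => (norm_conjKernel x ξ).le)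
      fun ξ => (norm_fst_le _).trans (hc ξ)).const_add 1
    rw [add_zero] at h
    exact h.congr fun x => (congrArg Prod.snd (hV x)).symm

/-- for a Schwartz initial datum `u₀` and `Im ζ ≥ 0`, the Volterra system has
a unique bounded continuous solution on `[0,∞)`, and this solution satisfies `v₁(x) → 0`
and `v₂(x) → 1` as `x → ∞`. -/
theorem stmt_15 (u₀ : SchwartzMap ℝ ℂ) (ζ : ℂ) (hζ : 0 ≤ ζ.im) :
    ∃ v : (ℝ → ℂ) × (ℝ → ℂ),
      IsVolterraSol u₀ ζ v ∧
      (∀ w : (ℝ → ℂ) × (ℝ → ℂ), IsVolterraSol u₀ ζ w →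
        ∀ x ≥ (0 : ℝ), w.1 x = v.1 x ∧ w.2 x = v.2 x) ∧
      Filter.Tendsto v.1 Filter.atTop (nhds 0) ∧
      Filter.Tendsto v.2 Filter.atTop (nhds 1) := by
  obtain ⟨v, hv, hv₁, hv₂⟩ := exists_isVolterraSol u₀ hζ
  exact ⟨v, hv, fun w hw => hw.eq_of_isVolterraSol hζ hv, hv₁, hv₂⟩
end

section
/- Let u₀ : ℝ → ℂ be a Schwartz function, and for Im ζ ≥ 0 define the spectral functions y(ζ) and z(ζ) as in the context. Then y(ζ) = 1 + O(1/ζ) and z(ζ) = O(1/ζ) as ζ → ∞ in the closed upper half-plane: there exist constants C > 0 and R > 0 such that |y(ζ) − 1| ≤ C/|ζ| and |z(ζ)| ≤ C/|ζ| for all ζ with Im ζ ≥ 0 and |ζ| ≥ R. -/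
/-!
For `Im ζ ≥ 0` and `ξ ≥ x` the kernel `e^{2iζ(ξ-x)}` has modulus at most `1`, so
`φ = |v₁| + |v₂|` satisfies `φ(x) ≤ 1 + ∫ₓ^∞ |u₀| φ`; Grönwall's inequality for tail integrals
then bounds `v` by `exp ‖u₀‖₁`, uniformly in `ζ`. Integrating the phase `e^{2iζ(ξ-x)}` by parts
against `u₀ v₂`, whose derivative `u₀' v₂ - |u₀|² v₁` has an `L¹` bound independent of `ζ`, gives
`|v₁(x)| = O(1/|ζ|)` uniformly in `x ≥ 0`, and then `y - 1 = ∫₀^∞ conj(u₀) v₁ = O(1/|ζ|)`.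
-/

open MeasureTheory Set Filter Topology

section TailIntegral

variable {E : Type*} [NormedAddCommGroup E] [NormedSpace ℝ E] {g : ℝ → E} {a : ℝ}

theorem integral_Ioi_eq_sub_intervalIntegral (hg : IntegrableOn g (Ioi a)) {x : ℝ} (hx : a ≤ x) :
    ∫ t in Ioi x, g t = (∫ t in Ioi a, g t) - ∫ t in a..x, g t :=
  (sub_eq_of_eq_add' (intervalIntegral.integral_interval_add_Ioi hg
    (hg.mono_set (Ioi_subset_Ioi hx))).symm).symm

theorem continuousOn_integral_Ioi (hg : IntegrableOn g (Ioi a)) :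
    ContinuousOn (fun x => ∫ t in Ioi x, g t) (Ici a) := by
  rintro x (hx : a ≤ x)
  have hax : a ≤ x + 1 := by linarith
  have hprim : ContinuousWithinAt (fun y => ∫ t in a..y, g t) (Icc a (x + 1)) x := by
    have hIcc : IntegrableOn g (Icc a (x + 1)) :=
      (integrableOn_Icc_iff_integrableOn_Ioc).mpr (hg.mono_set Ioc_subset_Ioi_self)
    rw [← uIcc_of_le hax] at hIcc ⊢
    exact intervalIntegral.continuousOn_primitive_interval hIcc x
      (by rw [uIcc_of_le hax]; exact ⟨hx, by linarith⟩)
  have hnhds : Icc a (x + 1) ∈ 𝓝[Ici a] x := by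
    rw [← Ici_inter_Iic]
    exact inter_mem_nhdsWithin _ (Iic_mem_nhds (by linarith))
  exact ((continuousWithinAt_const.sub hprim).mono_of_mem_nhdsWithin hnhds).congr
    (fun y hy => integral_Ioi_eq_sub_intervalIntegral hg hy)
    (integral_Ioi_eq_sub_intervalIntegral hg hx)

variable [CompleteSpace E]

theorem hasDerivAt_integral_Ioi (hg : IntegrableOn g (Ioi a)) (hgc : ContinuousOn g (Ioi a))
    {x : ℝ} (hx : a < x) : HasDerivAt (fun y => ∫ t in Ioi y, g t) (-g x) x := by
  have hprim : HasDerivAt (fun y => ∫ t in a..y, g t) (g x) x :=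
    intervalIntegral.integral_hasDerivAt_right
      ((intervalIntegrable_iff_integrableOn_Ioc_of_le hx.le).mpr
        (hg.mono_set Ioc_subset_Ioi_self))
      (hgc.stronglyMeasurableAtFilter isOpen_Ioi x hx)
      (hgc.continuousAt (isOpen_Ioi.mem_nhds hx))
  refine (hprim.const_sub (∫ t in Ioi a, g t)).congr_of_eventuallyEq ?_
  filter_upwards [isOpen_Ioi.mem_nhds hx] with y hy
  exact integral_Ioi_eq_sub_intervalIntegral hg (le_of_lt hy)

end TailIntegral

theorem le_mul_exp_integral_Ioi_of_le_add_integral_Ioi {g φ : ℝ → ℝ} {a c : ℝ}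
    (hg : IntegrableOn g (Ioi a)) (hgc : ContinuousOn g (Ioi a)) (hg0 : ∀ t > a, 0 ≤ g t)
    (hφc : ContinuousOn φ (Ioi a)) (hgφ : IntegrableOn (fun t => g t * φ t) (Ioi a))
    (h : ∀ x ≥ a, φ x ≤ c + ∫ t in Ioi x, g t * φ t) {x : ℝ} (hx : a ≤ x) :
    φ x ≤ c * Real.exp (∫ t in Ioi x, g t) := by
  set F : ℝ → ℝ := fun y => ∫ t in Ioi y, g t * φ t
  set G : ℝ → ℝ := fun y => ∫ t in Ioi y, g t
  -- `H` is nondecreasing because `(c + F)' = -g φ ≥ -g (c + F)`, and it tends to `c` at `∞`.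
  set H : ℝ → ℝ := fun y => (c + F y) * Real.exp (-G y)
  have hH_deriv : ∀ t > a,
      HasDerivAt H (g t * Real.exp (-G t) * (c + F t - φ t)) t := fun t ht => by
    have hF := hasDerivAt_integral_Ioi hgφ (hgc.mul hφc) ht
    have hG := hasDerivAt_integral_Ioi hg hgc ht
    refine ((hF.const_add c).mul hG.neg.exp).congr_deriv ?_
    simp only [Pi.neg_apply, F, G]
    ring
  have hH_mono : MonotoneOn H (Ici a) := by
    have hHc : ContinuousOn H (Ici a) :=
      (continuousOn_const.add (continuousOn_integral_Ioi hgφ)).mul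
        (continuousOn_integral_Ioi hg).neg.rexp
    refine monotoneOn_of_deriv_nonneg (convex_Ici a) hHc
      (fun t ht => ?_) (fun t ht => ?_) <;> rw [interior_Ici] at ht
    · exact (hH_deriv t ht).differentiableAt.differentiableWithinAt
    · rw [(hH_deriv t ht).deriv]
      exact mul_nonneg (mul_nonneg (hg0 t ht) (Real.exp_pos _).le) (by linarith [h t ht.le])
  have hH_top : Tendsto H atTop (𝓝 c) := by
    simpa using (tendsto_const_nhds.add (tendsto_integral_Ioi_zero tendsto_id)).mul
      (tendsto_integral_Ioi_zero (f := g) tendsto_id).neg.rexp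
  have hHx : H x ≤ c := ge_of_tendsto hH_top <| by
    filter_upwards [eventually_ge_atTop x] with t ht
    exact hH_mono hx (le_trans hx ht) ht
  calc φ x ≤ c + F x := h x hx
    _ = H x * Real.exp (G x) := by
      simp only [H, mul_assoc, ← Real.exp_add, neg_add_cancel, Real.exp_zero, mul_one]
    _ ≤ c * Real.exp (G x) := mul_le_mul_of_nonneg_right hHx (Real.exp_pos _).le

theorem Complex.norm_exp_mul_ofReal_le_one {c : ℂ} (hc : c.re ≤ 0) {t : ℝ} (ht : 0 ≤ t) :
    ‖Complex.exp (c * t)‖ ≤ 1 := by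
  rw [Complex.norm_exp, Real.exp_le_one_iff, Complex.re_mul_ofReal]
  exact mul_nonpos_of_nonpos_of_nonneg hc ht

theorem Complex.norm_exp_mul_ofReal_div_le {c : ℂ} (hc : c.re ≤ 0) {t : ℝ} (ht : 0 ≤ t) :
    ‖Complex.exp (c * t) / c‖ ≤ ‖c‖⁻¹ := by
  rw [norm_div, div_eq_mul_inv]
  exact mul_le_of_le_one_left (inv_nonneg.mpr (norm_nonneg c))
    (Complex.norm_exp_mul_ofReal_le_one hc ht)

section ExpIntegrationByParts

variable {c : ℂ} {w w' : ℝ → ℂ} {x : ℝ}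

theorem integral_Ioi_exp_mul_eq (hc : c.re ≤ 0) (hc0 : c ≠ 0)
    (hw : ∀ ξ ∈ Ioi x, HasDerivAt w (w' ξ) ξ) (hwx : ContinuousWithinAt w (Ioi x) x)
    (hw' : IntegrableOn w' (Ioi x)) (hw_top : Tendsto w atTop (𝓝 0))
    (hint : IntegrableOn (fun ξ : ℝ => Complex.exp (c * (ξ - x : ℝ)) * w ξ) (Ioi x)) :
    ∫ ξ in Ioi x, Complex.exp (c * (ξ - x : ℝ)) * w ξ =
      -(w x / c) - ∫ ξ in Ioi x, Complex.exp (c * (ξ - x : ℝ)) / c * w' ξ := by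
  set u : ℝ → ℂ := fun ξ => Complex.exp (c * (ξ - x : ℝ)) / c
  have hu_deriv : ∀ ξ, HasDerivAt u (Complex.exp (c * (ξ - x : ℝ))) ξ := fun ξ => by
    refine ((((hasDerivAt_id ξ).sub_const x).ofReal_comp).const_mul c).cexp.div_const c
      |>.congr_deriv ?_
    field_simp
    simp
  have hu_cont : Continuous u := by fun_prop
  have hu_le : ∀ ξ, x ≤ ξ → ‖u ξ‖ ≤ ‖c‖⁻¹ := fun ξ hξ =>
    Complex.norm_exp_mul_ofReal_div_le hc (sub_nonneg.mpr hξ)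
  have huw' : IntegrableOn (fun ξ => u ξ * w' ξ) (Ioi x) :=
    hw'.bdd_mul hu_cont.aestronglyMeasurable <| (ae_restrict_iff' measurableSet_Ioi).mpr
      (Eventually.of_forall fun ξ hξ => hu_le ξ (le_of_lt hξ))
  have h_zero : Tendsto (fun ξ => u ξ * w ξ) (𝓝[>] x) (𝓝 (w x / c)) := by
    have hux : u x * w x = w x / c := by simp [u, div_eq_inv_mul, mul_comm]
    exact hux ▸ hu_cont.continuousWithinAt.mul hwx
  have h_top : Tendsto (fun ξ => u ξ * w ξ) atTop (𝓝 0) :=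
    isBoundedUnder_le_mul_tendsto_zero (isBoundedUnder_of_eventually_le
      (eventually_ge_atTop x |>.mono hu_le)) hw_top
  linear_combination integral_Ioi_mul_deriv_eq_deriv_mul (fun ξ _ => hu_deriv ξ) hw huw' hint
    h_zero h_top

theorem norm_integral_Ioi_exp_mul_le (hc : c.re ≤ 0) (hc0 : c ≠ 0)
    (hw : ∀ ξ ∈ Ioi x, HasDerivAt w (w' ξ) ξ) (hwx : ContinuousWithinAt w (Ioi x) x)
    (hw' : IntegrableOn w' (Ioi x)) (hw_top : Tendsto w atTop (𝓝 0))
    (hint : IntegrableOn (fun ξ : ℝ => Complex.exp (c * (ξ - x : ℝ)) * w ξ) (Ioi x)) :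
    ‖∫ ξ in Ioi x, Complex.exp (c * (ξ - x : ℝ)) * w ξ‖ ≤
      (‖w x‖ + ∫ ξ in Ioi x, ‖w' ξ‖) / ‖c‖ := by
  have hbound : ‖∫ ξ in Ioi x, Complex.exp (c * (ξ - x : ℝ)) / c * w' ξ‖ ≤
      ‖c‖⁻¹ * ∫ ξ in Ioi x, ‖w' ξ‖ := by
    rw [← integral_const_mul]
    refine norm_integral_le_of_norm_le (hw'.norm.const_mul _) ?_
    filter_upwards [ae_restrict_mem measurableSet_Ioi] with ξ (hξ : x < ξ)
    rw [norm_mul]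
    exact mul_le_mul_of_nonneg_right
      (Complex.norm_exp_mul_ofReal_div_le hc (sub_nonneg.mpr hξ.le)) (norm_nonneg _)
  rw [integral_Ioi_exp_mul_eq hc hc0 hw hwx hw' hw_top hint, div_eq_inv_mul (‖w x‖ + _), mul_add]
  refine (norm_sub_le _ _).trans (add_le_add ?_ hbound)
  rw [norm_neg, norm_div, div_eq_inv_mul]

end ExpIntegrationByParts

theorem IntegrableOn.mul_of_continuousOn_of_bdd {𝕜 : Type*} [NormedRing 𝕜] {f g : ℝ → 𝕜}
    {s : Set ℝ} {C : ℝ} (hf : IntegrableOn f s) (hg : ContinuousOn g s) (hs : MeasurableSet s)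
    (hC : ∀ x ∈ s, ‖g x‖ ≤ C) : IntegrableOn (fun x => f x * g x) s :=
  hf.mul_bdd (hg.aestronglyMeasurable hs) ((ae_restrict_iff' hs).mpr (Eventually.of_forall hC))

theorem Complex.exp_neg_mul_ofReal_sub (c : ℂ) (x ξ : ℝ) :
    Complex.exp (-(c * ((x - ξ : ℝ) : ℂ))) = Complex.exp (c * ((ξ - x : ℝ) : ℂ)) := by
  push_cast; ring_nf

theorem re_two_mul_I_mul_nonpos {ζ : ℂ} (hζ : 0 ≤ ζ.im) : (2 * Complex.I * ζ).re ≤ 0 := by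
  simpa using hζ

namespace IsVolterraSol

variable {u₀ : SchwartzMap ℝ ℂ} {ζ : ℂ} {v : (ℝ → ℂ) × (ℝ → ℂ)}

theorem norm_add_norm_le (hv : IsVolterraSol u₀ ζ v) (hζ : 0 ≤ ζ.im) {x : ℝ} (hx : 0 ≤ x) :
    ‖v.1 x‖ + ‖v.2 x‖ ≤ Real.exp (∫ ξ, ‖u₀ ξ‖) := by
  obtain ⟨hc₁, hc₂, ⟨C, hC⟩, hsol⟩ := hv
  have hintegrable : ∀ {w : ℝ → ℂ}, ContinuousOn w (Ici 0) → (∀ ξ ≥ 0, ‖w ξ‖ ≤ C) →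
      IntegrableOn (fun ξ => ‖u₀ ξ‖ * ‖w ξ‖) (Ioi 0) := fun hw hwC =>
    IntegrableOn.mul_of_continuousOn_of_bdd u₀.integrable.norm.integrableOn
      (hw.norm.mono Ioi_subset_Ici_self) measurableSet_Ioi
      fun ξ hξ => by simpa using hwC ξ (le_of_lt hξ)
  have hint₁ := hintegrable hc₁ fun ξ hξ => (hC ξ hξ).1
  have hint₂ := hintegrable hc₂ fun ξ hξ => (hC ξ hξ).2
  have hle : ∀ y ≥ (0 : ℝ), ‖v.1 y‖ + ‖v.2 y‖ ≤
      1 + ∫ ξ in Ioi y, ‖u₀ ξ‖ * (‖v.1 ξ‖ + ‖v.2 ξ‖) := fun y hy => by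
    have hsub := Ioi_subset_Ioi hy
    have h₁ : ‖v.1 y‖ ≤ ∫ ξ in Ioi y, ‖u₀ ξ‖ * ‖v.2 ξ‖ := by
      rw [(hsol y hy).2.2.1, norm_neg]
      refine norm_integral_le_of_norm_le (hint₂.mono_set hsub) ?_
      filter_upwards [ae_restrict_mem measurableSet_Ioi] with ξ (hξ : y < ξ)
      rw [norm_mul, norm_mul, Complex.exp_neg_mul_ofReal_sub]
      gcongr
      exact mul_le_of_le_one_left (norm_nonneg _) (Complex.norm_exp_mul_ofReal_le_one
        (re_two_mul_I_mul_nonpos hζ) (sub_nonneg.mpr hξ.le))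
    have h₂ : ‖v.2 y‖ ≤ 1 + ∫ ξ in Ioi y, ‖u₀ ξ‖ * ‖v.1 ξ‖ := by
      rw [(hsol y hy).2.2.2]
      refine (norm_add_le _ _).trans ?_
      rw [norm_one]
      gcongr
      refine norm_integral_le_of_norm_le (hint₁.mono_set hsub) (Eventually.of_forall fun ξ => ?_)
      rw [norm_mul, Complex.norm_conj]
    simp_rw [mul_add]
    rw [integral_add (hint₁.mono_set hsub) (hint₂.mono_set hsub)]
    linarith
  have hgronwall := le_mul_exp_integral_Ioi_of_le_add_integral_Ioi
    (φ := fun ξ => ‖v.1 ξ‖ + ‖v.2 ξ‖)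
    u₀.integrable.norm.integrableOn u₀.continuous.norm.continuousOn (fun t _ => norm_nonneg _)
    ((hc₁.norm.add hc₂.norm).mono Ioi_subset_Ici_self)
    (by simp_rw [mul_add]; exact hint₁.add hint₂) hle hx
  rw [one_mul] at hgronwall
  exact hgronwall.trans (Real.exp_le_exp.mpr (setIntegral_le_integral u₀.integrable.norm
    (Eventually.of_forall fun _ => norm_nonneg _)))

theorem hasDerivAt_snd (hv : IsVolterraSol u₀ ζ v) {x : ℝ} (hx : 0 < x) :
    HasDerivAt v.2 (-(starRingEnd ℂ (u₀ x) * v.1 x)) x := by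
  obtain ⟨hc₁, -, -, hsol⟩ := hv
  have hcont : ContinuousOn (fun ξ => starRingEnd ℂ (u₀ ξ) * v.1 ξ) (Ioi 0) :=
    ((Complex.continuous_conj.comp u₀.continuous).continuousOn.mul hc₁).mono
      Ioi_subset_Ici_self
  refine ((hasDerivAt_integral_Ioi (hsol 0 le_rfl).2.1 hcont hx).const_add 1)
    |>.congr_of_eventuallyEq ?_
  filter_upwards [isOpen_Ioi.mem_nhds hx] with y (hy : 0 < y)
  exact (hsol y hy.le).2.2.2

theorem integrableOn_deriv_mul_snd (hv : IsVolterraSol u₀ ζ v) {x : ℝ} (hx : 0 ≤ x) :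
    IntegrableOn
      (fun ξ => deriv u₀ ξ * v.2 ξ - u₀ ξ * (starRingEnd ℂ (u₀ ξ) * v.1 ξ)) (Ioi x) := by
  obtain ⟨hc₁, hc₂, ⟨C, hC⟩, -⟩ := hv
  have hIoi : Ioi x ⊆ Ici 0 := fun ξ hξ => hx.trans (le_of_lt hξ)
  have hconj_mul : ContinuousOn (fun ξ => starRingEnd ℂ (u₀ ξ) * v.1 ξ) (Ioi x) :=
    ((Complex.continuous_conj.comp u₀.continuous).continuousOn.mul hc₁).mono hIoi
  refine IntegrableOn.sub ?_ ?_
  · exact IntegrableOn.mul_of_continuousOn_of_bdd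
      (SchwartzMap.derivCLM ℝ ℂ u₀).integrable.integrableOn (hc₂.mono hIoi) measurableSet_Ioi
      fun ξ hξ => (hC ξ (hIoi hξ)).2
  · refine IntegrableOn.mul_of_continuousOn_of_bdd u₀.integrable.integrableOn hconj_mul
      measurableSet_Ioi (C := SchwartzMap.seminorm ℝ 0 0 u₀ * C) fun ξ hξ => ?_
    rw [norm_mul, Complex.norm_conj]
    exact mul_le_mul (u₀.norm_le_seminorm ℝ ξ) (hC ξ (hIoi hξ)).1 (norm_nonneg _)
      (apply_nonneg _ _)

theorem integral_norm_deriv_mul_snd_le (hv : IsVolterraSol u₀ ζ v) {M : ℝ}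
    (hM : ∀ ξ ≥ (0 : ℝ), ‖v.1 ξ‖ ≤ M ∧ ‖v.2 ξ‖ ≤ M) {x : ℝ} (hx : 0 ≤ x) :
    ∫ ξ in Ioi x, ‖deriv u₀ ξ * v.2 ξ - u₀ ξ * (starRingEnd ℂ (u₀ ξ) * v.1 ξ)‖ ≤
      M * ∫ ξ, (‖deriv u₀ ξ‖ + SchwartzMap.seminorm ℝ 0 0 u₀ * ‖u₀ ξ‖) := by
  set S := SchwartzMap.seminorm ℝ 0 0 u₀
  have hM0 : 0 ≤ M := (norm_nonneg _).trans (hM x hx).1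
  have hd : Integrable (fun ξ => M * (‖deriv u₀ ξ‖ + S * ‖u₀ ξ‖)) :=
    ((SchwartzMap.derivCLM ℝ ℂ u₀).integrable.norm.add
      (u₀.integrable.norm.const_mul S)).const_mul M
  have hpointwise : ∀ ξ ∈ Ioi x, ‖deriv u₀ ξ * v.2 ξ - u₀ ξ * (starRingEnd ℂ (u₀ ξ) * v.1 ξ)‖ ≤
      M * (‖deriv u₀ ξ‖ + S * ‖u₀ ξ‖) := fun ξ hξ => by
    obtain ⟨h₁, h₂⟩ := hM ξ (hx.trans (le_of_lt hξ))
    refine (norm_sub_le _ _).trans ?_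
    simp only [norm_mul, Complex.norm_conj]
    have h₃ : ‖u₀ ξ‖ * ‖v.1 ξ‖ ≤ S * M :=
      mul_le_mul (u₀.norm_le_seminorm ℝ ξ) h₁ (norm_nonneg _) (apply_nonneg _ _)
    nlinarith [norm_nonneg (deriv u₀ ξ), norm_nonneg (u₀ ξ)]
  rw [← integral_const_mul]
  exact (setIntegral_mono_on (hv.integrableOn_deriv_mul_snd hx).norm hd.integrableOn
    measurableSet_Ioi hpointwise).trans
    (setIntegral_le_integral hd (Eventually.of_forall fun ξ => by positivity))

theorem norm_fst_le (hv : IsVolterraSol u₀ ζ v) (hζ : 0 ≤ ζ.im) (hζ0 : ζ ≠ 0) {x : ℝ}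
    (hx : 0 ≤ x) :
    ‖v.1 x‖ ≤ Real.exp (∫ ξ, ‖u₀ ξ‖) * (SchwartzMap.seminorm ℝ 0 0 u₀ +
      ∫ ξ, (‖deriv u₀ ξ‖ + SchwartzMap.seminorm ℝ 0 0 u₀ * ‖u₀ ξ‖)) / (2 * ‖ζ‖) := by
  set S := SchwartzMap.seminorm ℝ 0 0 u₀
  set M := Real.exp (∫ ξ, ‖u₀ ξ‖)
  have hM : ∀ ξ ≥ (0 : ℝ), ‖v.1 ξ‖ ≤ M ∧ ‖v.2 ξ‖ ≤ M := fun ξ hξ => by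
    have := hv.norm_add_norm_le hζ hξ
    exact ⟨by linarith [norm_nonneg (v.2 ξ)], by linarith [norm_nonneg (v.1 ξ)]⟩
  set w : ℝ → ℂ := fun ξ => u₀ ξ * v.2 ξ
  set w' : ℝ → ℂ := fun ξ => deriv u₀ ξ * v.2 ξ - u₀ ξ * (starRingEnd ℂ (u₀ ξ) * v.1 ξ)
  have hw : ∀ ξ ∈ Ioi x, HasDerivAt w (w' ξ) ξ := fun ξ hξ =>
    ((u₀.hasDerivAt ξ).mul (hv.hasDerivAt_snd (hx.trans_lt hξ))).congr_deriv (by ring)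
  have hwx : ContinuousWithinAt w (Ioi x) x :=
    u₀.continuous.continuousWithinAt.mul
      ((hv.2.1 x hx).mono fun ξ hξ => hx.trans (le_of_lt hξ))
  have hw_top : Tendsto w atTop (𝓝 0) :=
    (u₀.tendsto_cocompact.mono_left atTop_le_cocompact).zero_mul_isBoundedUnder_le
      (isBoundedUnder_of_eventually_le (eventually_ge_atTop 0 |>.mono fun ξ hξ => (hM ξ hξ).2))
  have hkernel : (fun ξ : ℝ =>
      Complex.exp (-(2 * Complex.I * ζ * ((x - ξ : ℝ) : ℂ))) * u₀ ξ * v.2 ξ) =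
      fun ξ : ℝ => Complex.exp (2 * Complex.I * ζ * (ξ - x : ℝ)) * w ξ :=
    funext fun ξ => by rw [Complex.exp_neg_mul_ofReal_sub, mul_assoc]
  obtain ⟨hint, -, hv₁, -⟩ := hv.2.2.2 x hx
  rw [hkernel] at hint hv₁
  have hwx_le : ‖w x‖ ≤ S * M :=
    (norm_mul_le _ _).trans (mul_le_mul (u₀.norm_le_seminorm ℝ x) (hM x hx).2
      (norm_nonneg _) (apply_nonneg _ _))
  calc ‖v.1 x‖ = ‖∫ ξ in Ioi x, Complex.exp (2 * Complex.I * ζ * (ξ - x : ℝ)) * w ξ‖ := by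
        rw [hv₁, norm_neg]
    _ ≤ (‖w x‖ + ∫ ξ in Ioi x, ‖w' ξ‖) / ‖2 * Complex.I * ζ‖ :=
        norm_integral_Ioi_exp_mul_le (re_two_mul_I_mul_nonpos hζ) (by simpa using hζ0)
          hw hwx (hv.integrableOn_deriv_mul_snd hx) hw_top hint
    _ ≤ M * (S + ∫ ξ, (‖deriv u₀ ξ‖ + S * ‖u₀ ξ‖)) / (2 * ‖ζ‖) := by
        rw [show ‖2 * Complex.I * ζ‖ = 2 * ‖ζ‖ by simp]
        gcongr
        linarith [hv.integral_norm_deriv_mul_snd_le hM hx]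

theorem norm_snd_sub_one_le (hv : IsVolterraSol u₀ ζ v) {B : ℝ} (hB : ∀ ξ ≥ (0 : ℝ), ‖v.1 ξ‖ ≤ B)
    {x : ℝ} (hx : 0 ≤ x) : ‖v.2 x - 1‖ ≤ (∫ ξ, ‖u₀ ξ‖) * B := by
  obtain ⟨-, -, -, hsol⟩ := hv
  have hB0 : 0 ≤ B := (norm_nonneg _).trans (hB x hx)
  have hint : Integrable (fun ξ => ‖u₀ ξ‖ * B) := u₀.integrable.norm.mul_const B
  rw [(hsol x hx).2.2.2, add_sub_cancel_left, ← integral_mul_const]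
  refine (norm_integral_le_of_norm_le hint.integrableOn ?_).trans
    (setIntegral_le_integral hint (Eventually.of_forall fun ξ => by positivity))
  filter_upwards [ae_restrict_mem measurableSet_Ioi] with ξ (hξ : x < ξ)
  rw [norm_mul, Complex.norm_conj]
  exact mul_le_mul_of_nonneg_left (hB ξ (hx.trans hξ.le)) (norm_nonneg _)

end IsVolterraSol

/-- the spectral functions `y(ζ) = v₂(0,ζ)` and `z(ζ) = v₁(0,ζ)` satisfy
`y(ζ) = 1 + O(1/ζ)` and `z(ζ) = O(1/ζ)` as `ζ → ∞` in the closed upper half-plane: there are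
constants `C > 0` and `R > 0` with `|y(ζ) − 1| ≤ C/|ζ|` and `|z(ζ)| ≤ C/|ζ|` whenever
`Im ζ ≥ 0` and `|ζ| ≥ R`. -/
theorem stmt_17 (u₀ : SchwartzMap ℝ ℂ) (V : ℂ → (ℝ → ℂ) × (ℝ → ℂ))
    (hV : ∀ ζ : ℂ, 0 ≤ ζ.im → IsVolterraSol u₀ ζ (V ζ)) :
    ∃ C > (0 : ℝ), ∃ R > (0 : ℝ), ∀ ζ : ℂ, 0 ≤ ζ.im → R ≤ ‖ζ‖ →
      ‖(V ζ).2 0 - 1‖ ≤ C / ‖ζ‖ ∧ ‖(V ζ).1 0‖ ≤ C / ‖ζ‖ := by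
  set A := ∫ ξ, ‖u₀ ξ‖
  set S := SchwartzMap.seminorm ℝ 0 0 u₀
  set K := Real.exp A * (S + ∫ ξ, (‖deriv u₀ ξ‖ + S * ‖u₀ ξ‖))
  have hA : 0 ≤ A := integral_nonneg fun ξ => norm_nonneg _
  have hK : 0 ≤ K := by positivity
  refine ⟨A * K + K + 1, by positivity, 1, one_pos, fun ζ hζ hR => ?_⟩
  have hζ0 : 0 < ‖ζ‖ := one_pos.trans_le hR
  have hv₁ : ∀ x ≥ (0 : ℝ), ‖(V ζ).1 x‖ ≤ K / ‖ζ‖ := fun x hx =>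
    ((hV ζ hζ).norm_fst_le hζ (norm_pos_iff.mp hζ0) hx).trans
      (div_le_div_of_nonneg_left hK hζ0 (by linarith))
  constructor
  · calc ‖(V ζ).2 0 - 1‖ ≤ A * (K / ‖ζ‖) := (hV ζ hζ).norm_snd_sub_one_le hv₁ le_rfl
      _ ≤ (A * K + K + 1) / ‖ζ‖ := by rw [← mul_div_assoc]; gcongr; linarith
  · exact (hv₁ 0 le_rfl).trans (by gcongr; linarith [mul_nonneg hA hK])
end
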